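/- Define v : ℝ → ℝ by v(x) := exp(−x²/2)·π^(−1/2)·∫₀^∞ exp(−t² − 2xt)·t^(−1/2) dt. Then v(0) = √π/(√2·Γ(3/4)) and v′(0) = −√(2π)/Γ(1/4), where Γ is the real Gamma function. -/

import Mathlib

/-!
At `x = 0` the integral is a Gaussian moment, `∫₀^∞ e^{-t²} t^s dt = Γ((s+1)/2)/2`. Differentiating
under the integral sign (dominated by a multiple of `e^{-t²/2} t^{s+1}`) lowers the Hermite index by
one: `d/dx ∫₀^∞ e^{-t²-2xt} t^s dt = -2 ∫₀^∞ e^{-t²-2xt} t^{s+1} dt`. Since the prefactor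
`e^{-x²/2}` has zero derivative at `0`, `v(0) = Γ(1/4)/(2√π)` and `v'(0) = -Γ(3/4)/√π`, and the
reflection formula `Γ(1/4) Γ(3/4) = π / sin(π/4) = √2 π` puts these in the stated form.
-/

open Set Real

/-- `v(x) = e^(−x²/2) · H_{−1/2}(x)` via the integral representation
`H_{−1/2}(x) = π^(−1/2) ∫₀^∞ e^(−t² − 2xt) t^(−1/2) dt`. -/
noncomputable def vFun (x : ℝ) : ℝ :=
  Real.exp (-x ^ 2 / 2) * π ^ (-(1 / 2) : ℝ) *
    ∫ t in Set.Ioi (0 : ℝ), Real.exp (-t ^ 2 - 2 * x * t) * t ^ (-(1 / 2) : ℝ)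

open MeasureTheory

/-- `Γ(-ν) H_ν(x) = hermiteIntegral (-ν - 1) x` for `ν < 0`. -/
noncomputable def hermiteIntegral (s x : ℝ) : ℝ :=
  ∫ t in Ioi (0 : ℝ), exp (-t ^ 2 - 2 * x * t) * t ^ s

theorem integral_exp_neg_sq_mul_rpow {s : ℝ} (hs : -1 < s) :
    ∫ t in Ioi (0 : ℝ), exp (-t ^ 2) * t ^ s = Gamma ((s + 1) / 2) / 2 := by
  simp_rw [mul_comm (exp _), ← rpow_two]
  rw [integral_rpow_mul_exp_neg_rpow two_pos hs]
  ring

theorem hermiteIntegral_zero {s : ℝ} (hs : -1 < s) :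
    hermiteIntegral s 0 = Gamma ((s + 1) / 2) / 2 := by
  simpa [hermiteIntegral] using integral_exp_neg_sq_mul_rpow hs

theorem exp_neg_sq_sub_le (x t : ℝ) :
    exp (-t ^ 2 - 2 * x * t) ≤ exp (2 * x ^ 2) * exp (-(1 / 2) * t ^ 2) := by
  rw [← exp_add, exp_le_exp]
  nlinarith [sq_nonneg (t + 2 * x)]

theorem integrableOn_exp_neg_sq_sub_mul_rpow {s : ℝ} (hs : -1 < s) (x : ℝ) :
    IntegrableOn (fun t => exp (-t ^ 2 - 2 * x * t) * t ^ s) (Ioi 0) := by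
  refine ((integrableOn_rpow_mul_exp_neg_mul_sq (by norm_num : (0 : ℝ) < 1 / 2) hs).const_mul
    (exp (2 * x ^ 2))).mono' ?_ ?_
  · exact (ContinuousOn.mul (by fun_prop)
      (continuousOn_id.rpow_const fun t ht => Or.inl (ne_of_gt ht))).aestronglyMeasurable
      measurableSet_Ioi
  · filter_upwards [self_mem_ae_restrict measurableSet_Ioi] with t ht
    have hts : 0 ≤ t ^ s := rpow_nonneg (le_of_lt ht) s
    rw [norm_of_nonneg (by positivity)]
    calc exp (-t ^ 2 - 2 * x * t) * t ^ s ≤ exp (2 * x ^ 2) * exp (-(1 / 2) * t ^ 2) * t ^ s :=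
          mul_le_mul_of_nonneg_right (exp_neg_sq_sub_le x t) hts
      _ = _ := by ring

theorem hasDerivAt_hermiteIntegral {s : ℝ} (hs : -1 < s) (x : ℝ) :
    HasDerivAt (hermiteIntegral s) (-2 * hermiteIntegral (s + 1) x) x := by
  set C := exp (2 * (|x| + 1) ^ 2)
  have hs' : -1 < s + 1 := by linarith
  have key := hasDerivAt_integral_of_dominated_loc_of_deriv_le
    (μ := volume.restrict (Ioi 0)) (x₀ := x)
    (F := fun y t => exp (-t ^ 2 - 2 * y * t) * t ^ s)
    (F' := fun y t => -2 * (exp (-t ^ 2 - 2 * y * t) * t ^ (s + 1)))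
    (bound := fun t => 2 * C * (t ^ (s + 1) * exp (-(1 / 2) * t ^ 2)))
    (Metric.ball_mem_nhds x one_pos)
    (Filter.Eventually.of_forall fun y => (integrableOn_exp_neg_sq_sub_mul_rpow hs y).1)
    (integrableOn_exp_neg_sq_sub_mul_rpow hs x)
    ((integrableOn_exp_neg_sq_sub_mul_rpow hs' x).const_mul (-2)).1
    ?bound
    ((integrableOn_rpow_mul_exp_neg_mul_sq (by norm_num : (0 : ℝ) < 1 / 2) hs').const_mul
      (2 * C))
    ?deriv
  · have hderiv := key.2
    rw [integral_const_mul] at hderiv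
    exact hderiv
  case bound =>
    filter_upwards [self_mem_ae_restrict measurableSet_Ioi] with t ht y hy
    have hts : 0 ≤ t ^ (s + 1) := rpow_nonneg (le_of_lt ht) _
    have hyx : |y| ≤ |x| + 1 := by
      have := abs_sub_abs_le_abs_sub y x
      rw [Metric.mem_ball, dist_eq] at hy
      linarith
    have hexp : exp (2 * y ^ 2) ≤ C := by
      rw [exp_le_exp, ← sq_abs y]
      gcongr
    rw [norm_mul, norm_neg, norm_two, norm_of_nonneg (by positivity)]
    calc 2 * (exp (-t ^ 2 - 2 * y * t) * t ^ (s + 1))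
        ≤ 2 * (exp (2 * y ^ 2) * exp (-(1 / 2) * t ^ 2) * t ^ (s + 1)) := by
          gcongr
          exact exp_neg_sq_sub_le y t
      _ ≤ 2 * (C * exp (-(1 / 2) * t ^ 2) * t ^ (s + 1)) := by gcongr
      _ = _ := by ring
  case deriv =>
    filter_upwards [self_mem_ae_restrict measurableSet_Ioi] with t ht y _
    have hlin : HasDerivAt (fun y : ℝ => -t ^ 2 - 2 * y * t) (-2 * t) y := by
      simpa using ((hasDerivAt_id y).const_mul 2).mul_const t |>.const_sub (-t ^ 2)
    refine (hlin.exp.mul_const (t ^ s)).congr_deriv ?_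
    rw [rpow_add_one (ne_of_gt ht)]
    ring

theorem Gamma_one_quarter_mul_Gamma_three_quarters :
    Gamma (1 / 4) * Gamma (3 / 4) = √2 * π := by
  have h := Gamma_mul_Gamma_one_sub (1 / 4)
  rw [show (1 : ℝ) - 1 / 4 = 3 / 4 by norm_num, show π * (1 / 4) = π / 4 by ring,
    sin_pi_div_four] at h
  rw [h, div_eq_iff (by positivity)]
  linear_combination (-π / 2) * Real.mul_self_sqrt (show (0 : ℝ) ≤ 2 by norm_num)

/-- `v(0) = √π / (√2 Γ(3/4))` and `v′(0) = −√(2π) / Γ(1/4)`. -/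
theorem stmt11 :
    vFun 0 = Real.sqrt π / (Real.sqrt 2 * Real.Gamma (3 / 4)) ∧
    deriv vFun 0 = -Real.sqrt (2 * π) / Real.Gamma (1 / 4) := by
  have hv : vFun = fun x => exp (-x ^ 2 / 2) * π ^ (-(1 / 2) : ℝ) * hermiteIntegral (-(1 / 2)) x :=
    rfl
  have hprefactor : HasDerivAt (fun x : ℝ => exp (-x ^ 2 / 2) * π ^ (-(1 / 2) : ℝ)) 0 0 := by
    simpa using ((hasDerivAt_pow 2 (0 : ℝ)).neg.div_const 2).exp.mul_const (π ^ (-(1 / 2) : ℝ))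
  have hderiv := hprefactor.fun_mul (hasDerivAt_hermiteIntegral (s := -(1 / 2)) (by norm_num) 0)
  rw [← hv] at hderiv
  have hI₀ : hermiteIntegral (-(1 / 2)) 0 = Gamma (1 / 4) / 2 := by
    rw [hermiteIntegral_zero (by norm_num)]; norm_num
  have hI₁ : hermiteIntegral (-(1 / 2) + 1) 0 = Gamma (3 / 4) / 2 := by
    rw [hermiteIntegral_zero (by norm_num)]; norm_num
  have hπ : π ^ (-(1 / 2) : ℝ) = (√π)⁻¹ := by rw [rpow_neg pi_pos.le, ← sqrt_eq_rpow]
  have hG := Gamma_one_quarter_mul_Gamma_three_quarters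
  have hsqrtπ : √π ^ 2 = π := sq_sqrt pi_pos.le
  have hsqrt2 : √2 ^ 2 = 2 := sq_sqrt zero_le_two
  constructor
  · rw [hv]
    norm_num [hI₀, hπ]
    field_simp
    linear_combination √2 * hG + π * hsqrt2 - 2 * hsqrtπ
  · rw [hderiv.deriv, hI₁, sqrt_mul zero_le_two]
    norm_num [hπ]
    field_simp
    linear_combination -hG + √2 * hsqrtπ
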